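/- arXiv:2002.04730 — 3 statements merged into one kernel-verified Lean document; each statement's English description precedes it below -/
import Mathlib

section
/- Let V : ℝ → ℝ with ∫(1+|x|)|V(x)|dx < ∞, and let B_+ : ℝ × ℝ → ℝ be measurable, supported in {y ≥ 0} in the second variable, and satisfy the Marchenko equation B_+(x,y) = ∫_{x+y}^∞ V(t)dt + ∫_0^y ∫_{x+y−z}^∞ V(t) B_+(t,z) dt dz for y ≥ 0, together with the a priori bound |B_+(x,y)| ≤ e^{γ^+(x)} ρ^+(x+y) where ρ^+(u)=∫_u^∞|V| and γ^+(x)=∫_x^∞ (t−x)|V(t)|dt. Then there is a constant c depending only on ∫(1+|x|)|V(x)|dx such that for all x ∈ ℝ, ∫_0^∞ |B_+(x,y)| dy ≤ c(1 + max(0, −x)). -/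
/-!
Write `N x = ∫_0^∞ |B(x,y)| dy` and `w x = 1 + max 0 (-x)`. Integrating the Marchenko equation
in `y` and using Tonelli gives the Volterra inequality
`N x ≤ γ(x) + ∫_x^∞ (t - x) |V t| N t dt`, with `γ(x) ≤ w x · M` for `M = ∫(1+|t|)|V|`. Since
`(t - x) w t ≤ w x (1 + |t|)` for `t ≥ x`, the quotient `ψ = N / w` satisfies
`ψ x ≤ M + ∫_x^∞ (1+|t|)|V t| ψ t dt` with an integrable kernel. The a priori bound makes `ψ`
bounded on every half-line `[x, ∞)`; cutting the kernel where its left tail has mass `< 1/2`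
turns the inequality into `sup_{[x,∞)} ψ ≤ sup_{[x,∞)} ψ / 2 + C` with `C` independent of `x`,
so `ψ` is bounded.
-/

open MeasureTheory intervalIntegral
open Set Filter Function Topology
open scoped ENNReal

theorem sub_mul_one_add_max_neg_le (x t : ℝ) :
    (t - x) * (1 + max 0 (-t)) ≤ (1 + max 0 (-x)) * (1 + |t|) := by
  rcases le_total 0 t with ht | ht <;> rcases le_total 0 x with hx | hx <;>
    simp only [max_eq_left, max_eq_right, abs_of_nonneg, abs_of_nonpos, neg_nonpos, neg_nonneg,
      ht, hx] <;> nlinarith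

theorem sub_le_one_add_max_neg_mul (x t : ℝ) : t - x ≤ (1 + max 0 (-x)) * (1 + |t|) := by
  rcases le_or_gt x t with h | h
  · refine le_trans ?_ (sub_mul_one_add_max_neg_le x t)
    nlinarith [le_max_left 0 (-t)]
  · nlinarith [le_max_left 0 (-x), abs_nonneg t]

theorem lintegral_ofReal_sub_mul_le (W : ℝ → ℝ≥0∞) (x : ℝ) :
    ∫⁻ t, ENNReal.ofReal (t - x) * W t ≤
      ENNReal.ofReal (1 + max 0 (-x)) * ∫⁻ t, ENNReal.ofReal (1 + |t|) * W t := by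
  rw [← lintegral_const_mul' _ _ ENNReal.ofReal_ne_top]
  refine lintegral_mono fun t => ?_
  rw [← mul_assoc, ← ENNReal.ofReal_mul (by positivity)]
  gcongr
  exact sub_le_one_add_max_neg_mul x t

theorem lintegral_Ioi_lintegral_Ioi_add {f : ℝ → ℝ≥0∞} (hf : Measurable f) (x : ℝ) :
    ∫⁻ y in Ioi 0, ∫⁻ t in Ioi (x + y), f t = ∫⁻ t, ENNReal.ofReal (t - x) * f t := by
  have hset : MeasurableSet {p : ℝ × ℝ | x + p.1 < p.2} :=
    measurableSet_lt (by fun_prop) (by fun_prop)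
  have hslice : ∀ y t, {p : ℝ × ℝ | x + p.1 < p.2}.indicator (fun p => f p.2) (y, t) =
      (Iio (t - x)).indicator (fun _ => f t) y := by
    intro y t
    simp only [indicator_apply, mem_ofPred_eq, mem_Iio, lt_sub_iff_add_lt']
  calc ∫⁻ y in Ioi 0, ∫⁻ t in Ioi (x + y), f t
      = ∫⁻ y in Ioi 0, ∫⁻ t, {p : ℝ × ℝ | x + p.1 < p.2}.indicator (fun p => f p.2) (y, t) := by
        simp only [← lintegral_indicator measurableSet_Ioi]
        rfl
    _ = ∫⁻ t, ∫⁻ y in Ioi 0, (Iio (t - x)).indicator (fun _ => f t) y := by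
        simp only [← hslice]
        exact lintegral_lintegral_swap ((hf.comp measurable_snd).indicator hset).aemeasurable
    _ = ∫⁻ t, ENNReal.ofReal (t - x) * f t := by
        simp only [setLIntegral_indicator measurableSet_Iio, setLIntegral_const, Iio_inter_Ioi,
          Real.volume_Ioo, sub_zero, mul_comm]

theorem lintegral_Ioi_lintegral_Ioc_sub {Φ : ℝ → ℝ → ℝ≥0∞} (hΦ : Measurable (uncurry Φ)) :
    ∫⁻ y in Ioi 0, ∫⁻ z in Ioc 0 y, Φ (y - z) z = ∫⁻ z in Ioi 0, ∫⁻ u in Ici 0, Φ u z := by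
  set F : ℝ × ℝ → ℝ≥0∞ := {p | p.2 ≤ p.1}.indicator (fun p => Φ (p.1 - p.2) p.2)
  have hF : Measurable F :=
    (hΦ.comp ((measurable_fst.sub measurable_snd).prodMk measurable_snd)).indicator
      (measurableSet_le measurable_snd measurable_fst)
  calc ∫⁻ y in Ioi 0, ∫⁻ z in Ioc 0 y, Φ (y - z) z
      = ∫⁻ y in Ioi 0, ∫⁻ z in Ioi 0, F (y, z) := by
        refine lintegral_congr fun y => ?_
        rw [← Ioi_inter_Iic, inter_comm, ← setLIntegral_indicator measurableSet_Iic]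
        rfl
    _ = ∫⁻ z in Ioi 0, ∫⁻ y in Ioi 0, F (y, z) := lintegral_lintegral_swap hF.aemeasurable
    _ = ∫⁻ z in Ioi 0, ∫⁻ u in Ici 0, Φ u z := by
        refine setLIntegral_congr_fun measurableSet_Ioi fun z hz => ?_
        have hshift : ∀ y, (Ioi 0).indicator (fun y => F (y, z)) y =
            (Ici 0).indicator (fun u => Φ u z) (y - z) := by
          intro y
          by_cases hzy : z ≤ y
          · have hy : (0 : ℝ) < y := hz.out.trans_le hzy
            simp [F, hzy, hy]
          · simp [F, hzy]
        rw [← lintegral_indicator measurableSet_Ioi, ← lintegral_indicator measurableSet_Ici]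
        simp only [hshift, lintegral_sub_right_eq_self]

theorem lintegral_Ioi_lintegral_Ioc_lintegral_Ioi {G : ℝ → ℝ → ℝ≥0∞}
    (hG : Measurable (uncurry G)) (x : ℝ) :
    ∫⁻ y in Ioi 0, ∫⁻ z in Ioc 0 y, ∫⁻ t in Ioi (x + y - z), G t z =
      ∫⁻ t, ENNReal.ofReal (t - x) * ∫⁻ z in Ioi 0, G t z := by
  have hΦ : Measurable (uncurry fun u z => ∫⁻ t in Ioi (x + u), G t z) := by
    have hset : MeasurableSet {q : (ℝ × ℝ) × ℝ | x + q.1.1 < q.2} :=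
      measurableSet_lt (by fun_prop) (by fun_prop)
    simp only [uncurry_def, ← lintegral_indicator measurableSet_Ioi]
    exact ((hG.comp (measurable_snd.prodMk (measurable_snd.comp measurable_fst))).indicator
      hset).lintegral_prod_right'
  have hGz : ∀ z, Measurable fun t => G t z := fun z => hG.comp measurable_prodMk_right
  calc ∫⁻ y in Ioi 0, ∫⁻ z in Ioc 0 y, ∫⁻ t in Ioi (x + y - z), G t z
      = ∫⁻ z in Ioi 0, ∫⁻ u in Ici 0, ∫⁻ t in Ioi (x + u), G t z := by
        simp only [add_sub_assoc]
        exact lintegral_Ioi_lintegral_Ioc_sub hΦ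
    _ = ∫⁻ z in Ioi 0, ∫⁻ t, ENNReal.ofReal (t - x) * G t z := by
        refine lintegral_congr fun z => ?_
        rw [← setLIntegral_congr Ioi_ae_eq_Ici, lintegral_Ioi_lintegral_Ioi_add (hGz z)]
    _ = ∫⁻ t, ENNReal.ofReal (t - x) * ∫⁻ z in Ioi 0, G t z := by
        rw [lintegral_lintegral_swap ((measurable_snd.sub measurable_const).ennreal_ofReal.mul
          (hG.comp measurable_swap)).aemeasurable]
        exact lintegral_congr fun t => lintegral_const_mul _ (hG.comp measurable_prodMk_left)

theorem exists_setLIntegral_Iic_lt {g : ℝ → ℝ≥0∞} (hg : ∫⁻ t, g t ≠ ∞) {ε : ℝ≥0∞}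
    (hε : 0 < ε) : ∃ a, ∫⁻ t in Iic a, g t < ε := by
  have : IsFiniteMeasure (volume.withDensity g) := isFiniteMeasure_withDensity hg
  have hlim : Tendsto (fun a => volume.withDensity g (Iic a)) atBot (𝓝 0) := by
    have := tendsto_measure_iInter_atBot (μ := volume.withDensity g)
      (fun a : ℝ => measurableSet_Iic.nullMeasurableSet) (fun _ _ => Iic_subset_Iic.2)
      ⟨0, measure_ne_top _ _⟩
    rwa [iInter_Iic_eq_empty_iff.2 (by simp [not_bddBelow_univ]), measure_empty] at this
  obtain ⟨a, ha⟩ := (hlim.eventually (gt_mem_nhds hε)).exists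
  exact ⟨a, by rwa [withDensity_apply _ measurableSet_Iic] at ha⟩

theorem iSup_ne_top_of_le_add_setLIntegral_Ioi {g ψ : ℝ → ℝ≥0∞} {M : ℝ≥0∞}
    (hg : Measurable g) (hg_fin : ∫⁻ t, g t ≠ ∞) (hM : M ≠ ∞) (hψ_fin : ∀ x, ⨆ t ≥ x, ψ t ≠ ∞)
    (hψ : ∀ x, ψ x ≤ M + ∫⁻ t in Ioi x, g t * ψ t) : ⨆ x, ψ x ≠ ∞ := by
  obtain ⟨a, ha⟩ := exists_setLIntegral_Iic_lt hg_fin (ε := 2⁻¹) (by simp)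
  set K := ⨆ t ≥ a, ψ t
  set C := M + K * ∫⁻ t, g t
  have hC : C ≠ ∞ := ENNReal.add_ne_top.2 ⟨hM, ENNReal.mul_ne_top (hψ_fin a) hg_fin⟩
  suffices h : ∀ x, ⨆ t ≥ x, ψ t ≤ C * 2 from
    ne_top_of_le_ne_top (ENNReal.mul_ne_top hC ENNReal.ofNat_ne_top)
      (iSup_le fun x => (le_iSup₂_of_le x le_rfl le_rfl).trans (h x))
  intro x
  set S := ⨆ t ≥ x, ψ t
  have hS : S ≤ S / 2 + C := by
    refine iSup₂_le fun t ht => (hψ t).trans ?_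
    have hbound :
        ∀ s ∈ Ioi t, g s * ψ s ≤ (Iic a).indicator (fun s => S * g s) s + K * g s := by
      intro s hs
      by_cases hsa : s ≤ a
      · rw [indicator_of_mem (show s ∈ Iic a from hsa), mul_comm]
        exact le_add_right (by gcongr; exact le_iSup₂_of_le s (ht.trans hs.out.le) le_rfl)
      · rw [indicator_of_notMem (show s ∉ Iic a from hsa), zero_add, mul_comm]
        gcongr
        exact le_iSup₂_of_le s (not_le.1 hsa).le le_rfl
    calc M + ∫⁻ s in Ioi t, g s * ψ s
        ≤ M + ∫⁻ s, ((Iic a).indicator (fun s => S * g s) s + K * g s) := by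
          gcongr M + ?_
          exact (setLIntegral_mono (((hg.const_mul S).indicator measurableSet_Iic).add
            (hg.const_mul K)) hbound).trans (setLIntegral_le_lintegral _ _)
      _ = M + S * (∫⁻ s in Iic a, g s) + K * ∫⁻ s, g s := by
          rw [lintegral_add_right _ (hg.const_mul K), lintegral_indicator measurableSet_Iic,
            lintegral_const_mul _ hg, lintegral_const_mul _ hg, add_assoc]
      _ ≤ M + S * 2⁻¹ + K * ∫⁻ s, g s := by gcongr
      _ = S / 2 + C := by rw [div_eq_mul_inv]; ring
  rw [← ENNReal.div_le_iff two_ne_zero ENNReal.ofNat_ne_top]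
  refine (ENNReal.add_le_add_iff_left (ENNReal.div_ne_top (hψ_fin x) two_ne_zero)).1 ?_
  rwa [ENNReal.add_halves]

theorem div_le_add_setLIntegral_of_le_add_lintegral {W N : ℝ → ℝ≥0∞} {M : ℝ≥0∞} {x : ℝ}
    (hN : N x ≤ ENNReal.ofReal (1 + max 0 (-x)) * M + ∫⁻ t, ENNReal.ofReal (t - x) * (W t * N t)) :
    N x / ENNReal.ofReal (1 + max 0 (-x)) ≤
      M + ∫⁻ t in Ioi x,
        ENNReal.ofReal (1 + |t|) * W t * (N t / ENNReal.ofReal (1 + max 0 (-t))) := by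
  have hw : ∀ t : ℝ, ENNReal.ofReal (1 + max 0 (-t)) ≠ 0 := fun t => by
    rw [ENNReal.ofReal_ne_zero_iff]; positivity
  rw [ENNReal.div_le_iff (hw x) ENNReal.ofReal_ne_top, add_mul, mul_comm M,
    ← lintegral_mul_const' _ _ ENNReal.ofReal_ne_top, ← lintegral_indicator measurableSet_Ioi]
  refine hN.trans (add_le_add_right (lintegral_mono fun t => ?_) _)
  by_cases ht : t ∈ Ioi x
  · rw [indicator_of_mem ht]
    set ψ := N t / ENNReal.ofReal (1 + max 0 (-t))
    calc ENNReal.ofReal (t - x) * (W t * N t)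
        = ENNReal.ofReal (t - x) * (W t * (ψ * ENNReal.ofReal (1 + max 0 (-t)))) := by
          rw [ENNReal.div_mul_cancel (hw t) ENNReal.ofReal_ne_top]
      _ = ENNReal.ofReal (t - x) * ENNReal.ofReal (1 + max 0 (-t)) * (W t * ψ) := by ring
      _ ≤ ENNReal.ofReal (1 + max 0 (-x)) * ENNReal.ofReal (1 + |t|) * (W t * ψ) :=
          mul_le_mul_left (by
            rw [← ENNReal.ofReal_mul' (by positivity), ← ENNReal.ofReal_mul (by positivity)]
            exact ENNReal.ofReal_le_ofReal (sub_mul_one_add_max_neg_le x t)) _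
      _ = _ := by ring
  · rw [indicator_of_notMem ht, ENNReal.ofReal_eq_zero.2 (sub_nonpos.2 (not_lt.1 ht)), zero_mul]

section Marchenko

variable {V : ℝ → ℝ} {B : ℝ → ℝ → ℝ} {W : ℝ → ℝ≥0∞}

theorem aemeasurable_enorm_of_integrable_one_add_abs_mul
    (hV : Integrable fun t => (1 + |t|) * |V t|) : AEMeasurable fun t => ‖V t‖ₑ := by
  have hinv : Measurable fun t : ℝ => (1 + |t|)⁻¹ := by fun_prop
  refine ((hinv.aemeasurable.mul hV.aemeasurable).enorm).congr (ae_of_all _ fun t => ?_)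
  have : (1 : ℝ) + |t| ≠ 0 := by positivity
  simp only [Pi.mul_apply, ← mul_assoc, inv_mul_cancel₀ this, one_mul, Real.enorm_abs]

theorem lintegral_ofReal_one_add_abs_mul_ne_top (hV : Integrable fun t => (1 + |t|) * |V t|)
    (hVW : ∀ᵐ t, ‖V t‖ₑ = W t) : ∫⁻ t, ENNReal.ofReal (1 + |t|) * W t ≠ ∞ := by
  refine ne_of_eq_of_ne (lintegral_congr_ae ?_) hV.2.ne
  filter_upwards [hVW] with t ht
  rw [← ht, enorm_mul, Real.enorm_abs, Real.enorm_of_nonneg (by positivity : (0 : ℝ) ≤ 1 + |t|)]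

theorem integral_Ioi_sub_mul_abs_le (hV : Integrable fun t => (1 + |t|) * |V t|) (x : ℝ) :
    ∫ t in Ioi x, (t - x) * |V t| ≤ (1 + max 0 (-x)) * ∫ t, (1 + |t|) * |V t| := by
  calc ∫ t in Ioi x, (t - x) * |V t|
      ≤ ∫ t in Ioi x, (1 + max 0 (-x)) * ((1 + |t|) * |V t|) := by
        refine integral_mono_of_nonneg ?_ (hV.const_mul _).integrableOn ?_
        · exact ae_restrict_of_forall_mem measurableSet_Ioi fun t ht =>
            mul_nonneg (sub_nonneg.2 (le_of_lt ht)) (abs_nonneg _)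
        · refine ae_of_all _ fun t => ?_
          simp only [← mul_assoc]
          exact mul_le_mul_of_nonneg_right (sub_le_one_add_max_neg_mul x t) (abs_nonneg _)
    _ ≤ (1 + max 0 (-x)) * ∫ t, (1 + |t|) * |V t| := by
        rw [MeasureTheory.integral_const_mul]
        exact mul_le_mul_of_nonneg_left
          (setIntegral_le_integral hV (ae_of_all _ fun t => by positivity)) (by positivity)

theorem lintegral_enorm_le_of_apriori (hV : Integrable fun t => (1 + |t|) * |V t|)
    (hW : Measurable W) (hVW : ∀ᵐ t, ‖V t‖ₑ = W t) {x t : ℝ} (hxt : x ≤ t)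
    (hB_bd : ∀ y, |B t y| ≤
      Real.exp (∫ s in Ioi t, (s - t) * |V s|) * ∫ s in Ioi (t + y), |V s|) :
    ∫⁻ y in Ioi 0, ‖B t y‖ₑ ≤
      ENNReal.ofReal (Real.exp ((1 + max 0 (-x)) * ∫ s, (1 + |s|) * |V s|)) *
        (ENNReal.ofReal (1 + max 0 (-x)) * ∫⁻ s, ENNReal.ofReal (1 + |s|) * W s) := by
  have hw : 1 + max 0 (-t) ≤ 1 + max 0 (-x) := by gcongr
  have hI : 0 ≤ ∫ s, (1 + |s|) * |V s| := integral_nonneg fun s => by positivity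
  set E := ENNReal.ofReal (Real.exp ((1 + max 0 (-x)) * ∫ s, (1 + |s|) * |V s|))
  have hpt : ∀ y, ‖B t y‖ₑ ≤ E * ∫⁻ s in Ioi (t + y), W s := by
    intro y
    have htail : ENNReal.ofReal (∫ s in Ioi (t + y), |V s|) ≤ ∫⁻ s in Ioi (t + y), W s := by
      refine (Real.ofReal_le_enorm _).trans ((enorm_integral_le_lintegral_enorm _).trans_eq ?_)
      exact lintegral_congr_ae
        (ae_restrict_of_ae (hVW.mono fun s hs => by simp only [Real.enorm_abs, hs]))
    have hexp : ∫ s in Ioi t, (s - t) * |V s| ≤ (1 + max 0 (-x)) * ∫ s, (1 + |s|) * |V s| :=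
      (integral_Ioi_sub_mul_abs_le hV t).trans (by gcongr)
    rw [Real.enorm_eq_ofReal_abs]
    refine (ENNReal.ofReal_le_ofReal (hB_bd y)).trans ?_
    rw [ENNReal.ofReal_mul (Real.exp_nonneg _)]
    exact mul_le_mul' (ENNReal.ofReal_le_ofReal (Real.exp_le_exp.2 hexp)) htail
  calc ∫⁻ y in Ioi 0, ‖B t y‖ₑ ≤ ∫⁻ y in Ioi 0, E * ∫⁻ s in Ioi (t + y), W s :=
        lintegral_mono hpt
    _ ≤ _ := by
        rw [lintegral_const_mul' _ _ ENNReal.ofReal_ne_top, lintegral_Ioi_lintegral_Ioi_add hW]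
        refine mul_le_mul_right ((lintegral_ofReal_sub_mul_le W t).trans ?_) E
        gcongr

theorem enorm_le_of_marchenko (hVW : ∀ᵐ t, ‖V t‖ₑ = W t) {x y : ℝ} (hy : 0 ≤ y)
    (hB : B x y = (∫ t in Ioi (x + y), V t) +
      ∫ z in (0 : ℝ)..y, ∫ t in Ioi (x + y - z), V t * B t z) :
    ‖B x y‖ₑ ≤ (∫⁻ t in Ioi (x + y), W t) +
      ∫⁻ z in Ioc 0 y, ∫⁻ t in Ioi (x + y - z), W t * ‖B t z‖ₑ := by
  rw [hB, intervalIntegral.integral_of_le hy]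
  refine (enorm_add_le _ _).trans (add_le_add ?_ ?_)
  · exact (enorm_integral_le_lintegral_enorm _).trans_eq
      (lintegral_congr_ae (ae_restrict_of_ae hVW))
  · refine (enorm_integral_le_lintegral_enorm _).trans (lintegral_mono fun z => ?_)
    refine (enorm_integral_le_lintegral_enorm _).trans_eq
      (lintegral_congr_ae (ae_restrict_of_ae ?_))
    filter_upwards [hVW] with t ht
    rw [enorm_mul, ht]

theorem lintegral_enorm_le_of_marchenko (hW : Measurable W) (hVW : ∀ᵐ t, ‖V t‖ₑ = W t)
    (hB_meas : Measurable (uncurry B)) {x : ℝ}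
    (hB_eq : ∀ y, 0 ≤ y → B x y = (∫ t in Ioi (x + y), V t) +
      ∫ z in (0 : ℝ)..y, ∫ t in Ioi (x + y - z), V t * B t z) :
    ∫⁻ y in Ioi 0, ‖B x y‖ₑ ≤ (∫⁻ t, ENNReal.ofReal (t - x) * W t) +
      ∫⁻ t, ENNReal.ofReal (t - x) * (W t * ∫⁻ z in Ioi 0, ‖B t z‖ₑ) := by
  have htail : Measurable fun y => ∫⁻ t in Ioi (x + y), W t :=
    Antitone.measurable fun y₁ y₂ h => lintegral_mono_set (Ioi_subset_Ioi (by linarith))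
  have hG : Measurable (uncurry fun t z => W t * ‖B t z‖ₑ) :=
    (hW.comp measurable_fst).mul hB_meas.enorm
  have hBt : ∀ t, Measurable fun z => ‖B t z‖ₑ := fun t =>
    (hB_meas.comp measurable_prodMk_left).enorm
  calc ∫⁻ y in Ioi 0, ‖B x y‖ₑ
      ≤ ∫⁻ y in Ioi 0, ((∫⁻ t in Ioi (x + y), W t) +
          ∫⁻ z in Ioc 0 y, ∫⁻ t in Ioi (x + y - z), W t * ‖B t z‖ₑ) :=
        setLIntegral_mono' measurableSet_Ioi fun y hy =>
          enorm_le_of_marchenko hVW hy.out.le (hB_eq y hy.out.le)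
    _ = _ := by
        rw [lintegral_add_left htail, lintegral_Ioi_lintegral_Ioi_add hW,
          lintegral_Ioi_lintegral_Ioc_lintegral_Ioi hG]
        simp only [lintegral_const_mul _ (hBt _)]

end Marchenko

theorem marchenko_kernel_L1_general (V : ℝ → ℝ) (B : ℝ → ℝ → ℝ)
    (hV : Integrable (fun x => (1 + |x|) * |V x|))
    (hB_meas : Measurable (Function.uncurry B))
    (hB_eq : ∀ x : ℝ, ∀ y : ℝ, 0 ≤ y →
      B x y = (∫ t in Set.Ioi (x + y), V t) +
        ∫ z in (0 : ℝ)..y, ∫ t in Set.Ioi (x + y - z), V t * B t z)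
    (hB_bd : ∀ x y : ℝ, |B x y| ≤
      Real.exp (∫ t in Set.Ioi x, (t - x) * |V t|) * ∫ t in Set.Ioi (x + y), |V t|) :
    ∃ c > (0 : ℝ), ∀ x : ℝ,
      (∫ y in Set.Ioi (0 : ℝ), |B x y|) ≤ c * (1 + max 0 (-x)) := by
  -- Only `|V|` is a.e.-measurable; `V` enters solely through `‖∫ V‖ₑ ≤ ∫⁻ ‖V‖ₑ`, valid regardless.
  obtain ⟨W, hW, hVW⟩ : ∃ W : ℝ → ℝ≥0∞, Measurable W ∧ ∀ᵐ t, ‖V t‖ₑ = W t :=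
    have hV' := aemeasurable_enorm_of_integrable_one_add_abs_mul hV
    ⟨hV'.mk, hV'.measurable_mk, hV'.ae_eq_mk⟩
  have hM := lintegral_ofReal_one_add_abs_mul_ne_top hV hVW
  have hw : ∀ x : ℝ, 1 ≤ ENNReal.ofReal (1 + max 0 (-x)) := fun x => by
    rw [ENNReal.one_le_ofReal]; linarith [le_max_left 0 (-x)]
  set N := fun x => ∫⁻ y in Ioi 0, ‖B x y‖ₑ
  set ψ := fun x => N x / ENNReal.ofReal (1 + max 0 (-x))
  have hψ : ⨆ x, ψ x ≠ ∞ := by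
    refine iSup_ne_top_of_le_add_setLIntegral_Ioi (by fun_prop) hM hM (fun x => ?_) fun x => ?_
    · refine ne_top_of_le_ne_top ?_ (iSup₂_le fun t hxt =>
        (ENNReal.div_le_of_le_mul (le_mul_of_one_le_right' (hw t))).trans
          (lintegral_enorm_le_of_apriori hV hW hVW hxt (hB_bd t)))
      finiteness
    · exact div_le_add_setLIntegral_of_le_add_lintegral
        ((lintegral_enorm_le_of_marchenko hW hVW hB_meas (hB_eq x)).trans
          (add_le_add_left (lintegral_ofReal_sub_mul_le W x) _))
  refine ⟨(⨆ x, ψ x).toReal + 1, by positivity, fun x => ?_⟩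
  have hNx : N x ≤ (⨆ x, ψ x) * ENNReal.ofReal (1 + max 0 (-x)) :=
    (ENNReal.div_le_iff (by positivity) ENNReal.ofReal_ne_top).1 (le_iSup ψ x)
  calc ∫ y in Ioi 0, |B x y| = (N x).toReal :=
        integral_norm_eq_lintegral_enorm (hB_meas.comp measurable_prodMk_left).aestronglyMeasurable
    _ ≤ (⨆ x, ψ x).toReal * (1 + max 0 (-x)) := by
        rw [← ENNReal.toReal_ofReal (by positivity : 0 ≤ 1 + max 0 (-x)), ← ENNReal.toReal_mul]
        exact ENNReal.toReal_mono (ENNReal.mul_ne_top hψ ENNReal.ofReal_ne_top) hNx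
    _ ≤ _ := by gcongr; linarith

/-- Weighted `L¹` bound for the Marchenko kernel `B₊`:
if `∫(1+|x|)|V| < ∞` then `∫_0^∞ |B₊(x,y)| dy ≤ c(1 + max(0,−x))`. -/
theorem marchenko_kernel_L1 (V : ℝ → ℝ) (B : ℝ → ℝ → ℝ)
    (hV : Integrable (fun x => (1 + |x|) * |V x|))
    (hB_meas : Measurable (Function.uncurry B))
    (hB_supp : ∀ x : ℝ, ∀ y < (0 : ℝ), B x y = 0)
    (hB_eq : ∀ x : ℝ, ∀ y : ℝ, 0 ≤ y →
      B x y = (∫ t in Set.Ioi (x + y), V t) +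
        ∫ z in (0 : ℝ)..y, ∫ t in Set.Ioi (x + y - z), V t * B t z)
    (hB_bd : ∀ x y : ℝ, |B x y| ≤
      Real.exp (∫ t in Set.Ioi x, (t - x) * |V t|) * ∫ t in Set.Ioi (x + y), |V t|) :
    ∃ c > (0 : ℝ), ∀ x : ℝ,
      (∫ y in Set.Ioi (0 : ℝ), |B x y|) ≤ c * (1 + max 0 (-x)) :=
  marchenko_kernel_L1_general V B hV hB_meas hB_eq hB_bd
end

section
/- Let V : ℝ → ℝ with ∫(1+|x|)²|V(x)|dx < ∞, and let B_+ satisfy the Marchenko equation and bound as above. Then there is a constant c depending only on ∫(1+|x|)²|V(x)|dx such that for all x ∈ ℝ, ∫_0^∞ y |B_+(x,y)| dy ≤ c(1 + max(0, −x))². -/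
/-!
Write `E x = ∫₀^∞ (1 + y) |B₊(x, y)| dy` and `w x = (1 + max 0 (-x))²`. Taking absolute values in
the Marchenko equation and applying Tonelli, with `1 + z + s ≤ (1 + z)(1 + s)` along `y = z + s`
(the reason for the weight `1 + y` rather than `y`), gives the Volterra inequality
`E x ≤ ∫_x^∞ (1 + t - x)² |V t| (1 + E t) dt`.
Since `(1 + t - x)² w t ≤ (1 + |t|)² w x`, the quotient `f = E / w` satisfies
`f x ≤ ∫_x^∞ K t (1 + f t) dt` with the integrable kernel `K t = (1 + |t|)² |V t|`.
The a priori bound on `B₊` makes `f` bounded on every half-line `[x₀, ∞)`; choosing `a` with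
`∫_{-∞}^a K ≤ 1/2` and comparing suprema of `f` over half-lines then shows that `f` is bounded,
i.e. `E ≤ C w`.
-/

open MeasureTheory Set Filter
open scoped ENNReal

namespace Marchenko

lemma one_add_sub_mul_le (x t : ℝ) :
    (1 + (t - x)) * (1 + max 0 (-t)) ≤ (1 + |t|) * (1 + max 0 (-x)) := by
  rcases le_total 0 t with ht | ht
  · rw [max_eq_left (neg_nonpos.mpr ht), abs_of_nonneg ht]
    nlinarith [le_max_left 0 (-x), le_max_right 0 (-x)]
  · rw [max_eq_right (neg_nonneg.mpr ht), abs_of_nonpos ht]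
    nlinarith [le_max_right 0 (-x)]

def weight (x : ℝ) : ℝ≥0∞ := ENNReal.ofReal ((1 + max 0 (-x)) ^ 2)

lemma one_le_weight (x : ℝ) : 1 ≤ weight x := by
  rw [weight, ← ENNReal.ofReal_one]
  exact ENNReal.ofReal_le_ofReal (one_le_pow₀ (le_add_of_nonneg_right (le_max_left _ _)))

lemma weight_ne_zero (x : ℝ) : weight x ≠ 0 := (zero_lt_one.trans_le (one_le_weight x)).ne'

lemma weight_ne_top (x : ℝ) : weight x ≠ ∞ := ENNReal.ofReal_ne_top

lemma ofReal_sq_mul_weight_le {x t : ℝ} (hxt : x ≤ t) :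
    ENNReal.ofReal ((1 + (t - x)) ^ 2) * weight t ≤ ENNReal.ofReal ((1 + |t|) ^ 2) * weight x := by
  have h0 : 0 ≤ (1 + (t - x)) * (1 + max 0 (-t)) :=
    mul_nonneg (by linarith) (by linarith [le_max_left 0 (-t)])
  rw [weight, weight, ← ENNReal.ofReal_mul (by positivity), ← ENNReal.ofReal_mul (by positivity),
    ← mul_pow, ← mul_pow]
  exact ENNReal.ofReal_le_ofReal (pow_le_pow_left₀ h0 (one_add_sub_mul_le x t) 2)

theorem lintegral_setLIntegral_swap {α β : Type*} [MeasurableSpace α] [MeasurableSpace β]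
    {μ : Measure α} {ν : Measure β} [SFinite μ] [SFinite ν] {S : Set (α × β)}
    (hS : MeasurableSet S) {f : α → β → ℝ≥0∞} (hf : Measurable (Function.uncurry f)) :
    ∫⁻ a, ∫⁻ b in Prod.mk a ⁻¹' S, f a b ∂ν ∂μ = ∫⁻ b, ∫⁻ a in (·, b) ⁻¹' S, f a b ∂μ ∂ν := by
  simp_rw [← lintegral_indicator (measurable_prodMk_left hS),
    ← lintegral_indicator (measurable_prodMk_right hS)]
  exact lintegral_lintegral_swap ((hf.indicator hS).aemeasurable)

lemma measurable_setLIntegral_Ioi {α : Type*} [MeasurableSpace α] {a : α → ℝ} (ha : Measurable a)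
    {G : α → ℝ → ℝ≥0∞} (hG : Measurable (Function.uncurry G)) :
    Measurable fun p => ∫⁻ t in Ioi (a p), G p t := by
  simp_rw [← lintegral_indicator measurableSet_Ioi]
  exact (hG.indicator
    (measurableSet_lt (ha.comp measurable_fst) measurable_snd)).lintegral_prod_right'

lemma setLIntegral_Ico_ofReal_le {z r : ℝ} (hz : 0 ≤ z) (hr : 0 ≤ r) :
    ∫⁻ y in Ico z (z + r), ENNReal.ofReal (1 + y)
      ≤ ENNReal.ofReal (1 + z) * ENNReal.ofReal ((1 + r) ^ 2) :=
  calc ∫⁻ y in Ico z (z + r), ENNReal.ofReal (1 + y)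
      ≤ ∫⁻ _ in Ico z (z + r), ENNReal.ofReal ((1 + z) * (1 + r)) :=
        setLIntegral_mono measurable_const fun y hy =>
          ENNReal.ofReal_le_ofReal (by nlinarith [hy.1, hy.2])
    _ = ENNReal.ofReal ((1 + z) * (1 + r) * r) := by
        rw [setLIntegral_const, Real.volume_Ico, add_sub_cancel_left,
          ← ENNReal.ofReal_mul (by positivity)]
    _ ≤ ENNReal.ofReal (1 + z) * ENNReal.ofReal ((1 + r) ^ 2) := by
        rw [← ENNReal.ofReal_mul (by linarith)]
        exact ENNReal.ofReal_le_ofReal (by nlinarith)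

lemma setLIntegral_Ici_mul_setLIntegral_Ioi_le {h : ℝ → ℝ≥0∞} (hh : Measurable h) (x : ℝ)
    {z : ℝ} (hz : 0 ≤ z) :
    ∫⁻ y in Ici z, ENNReal.ofReal (1 + y) * ∫⁻ t in Ioi (x + y - z), h t
      ≤ ENNReal.ofReal (1 + z) * ∫⁻ t in Ioi x, ENNReal.ofReal ((1 + (t - x)) ^ 2) * h t := by
  have hsection : ∀ t, {y | x + y - z < t} ∩ Ici z = Ico z (z + (t - x)) := fun t => by
    ext y
    simp only [mem_inter_iff, mem_ofPred_eq, mem_Ici, mem_Ico]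
    constructor <;> rintro ⟨h1, h2⟩ <;> constructor <;> linarith
  calc _ = ∫⁻ y in Ici z, ∫⁻ t in Ioi (x + y - z), ENNReal.ofReal (1 + y) * h t := by
        simp_rw [lintegral_const_mul' _ _ ENNReal.ofReal_ne_top]
    _ = ∫⁻ t, ∫⁻ y in {y | x + y - z < t}, ENNReal.ofReal (1 + y) * h t
          ∂volume.restrict (Ici z) :=
        lintegral_setLIntegral_swap (S := {p : ℝ × ℝ | x + p.1 - z < p.2})
          (measurableSet_lt (by fun_prop) measurable_snd) (by fun_prop)
    _ ≤ ∫⁻ t, (Ioi x).indicator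
          (fun t => ENNReal.ofReal (1 + z) * (ENNReal.ofReal ((1 + (t - x)) ^ 2) * h t)) t := by
        refine lintegral_mono fun t => ?_
        rw [Measure.restrict_restrict (measurableSet_lt (by fun_prop) measurable_const),
          lintegral_mul_const _ (by fun_prop), hsection]
        rcases le_or_gt t x with htx | htx
        · rw [Ico_eq_empty (by linarith), Measure.restrict_empty, lintegral_zero_measure,
            zero_mul]
          exact zero_le
        · rw [indicator_of_mem (show t ∈ Ioi x from htx), ← mul_assoc]
          exact mul_le_mul_left (setLIntegral_Ico_ofReal_le hz (sub_pos.mpr htx).le) _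
    _ = _ := by
        rw [lintegral_indicator measurableSet_Ioi, lintegral_const_mul' _ _ ENNReal.ofReal_ne_top]

lemma setLIntegral_Ioi_mul_setLIntegral_Ioi_le {h : ℝ → ℝ≥0∞} (hh : Measurable h) (x : ℝ) :
    ∫⁻ y in Ioi 0, ENNReal.ofReal (1 + y) * ∫⁻ t in Ioi (x + y), h t
      ≤ ∫⁻ t in Ioi x, ENNReal.ofReal ((1 + (t - x)) ^ 2) * h t := by
  simpa using (lintegral_mono_set Ioi_subset_Ici_self).trans
    (setLIntegral_Ici_mul_setLIntegral_Ioi_le hh x le_rfl)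

lemma setLIntegral_mul_volterra_le {G : ℝ → ℝ → ℝ≥0∞} (hG : Measurable (Function.uncurry G))
    (x : ℝ) :
    ∫⁻ y in Ioi 0, ENNReal.ofReal (1 + y) * ∫⁻ z in Ioc 0 y, ∫⁻ t in Ioi (x + y - z), G z t
      ≤ ∫⁻ z in Ioi 0, ENNReal.ofReal (1 + z) *
          ∫⁻ t in Ioi x, ENNReal.ofReal ((1 + (t - x)) ^ 2) * G z t := by
  have hF : Measurable fun p : ℝ × ℝ =>
      ENNReal.ofReal (1 + p.1) * ∫⁻ t in Ioi (x + p.1 - p.2), G p.2 t :=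
    (by fun_prop : Measurable fun p : ℝ × ℝ => ENNReal.ofReal (1 + p.1)).mul
      (measurable_setLIntegral_Ioi (by fun_prop)
        (hG.comp (measurable_fst.snd.prodMk measurable_snd)))
  calc _ = ∫⁻ y in Ioi 0, ∫⁻ z in Iic y,
        (ENNReal.ofReal (1 + y) * ∫⁻ t in Ioi (x + y - z), G z t)
          ∂volume.restrict (Ioi (0 : ℝ)) := by
        refine lintegral_congr fun y => ?_
        rw [Measure.restrict_restrict (measurableSet_Iic : MeasurableSet (Iic y)), Iic_inter_Ioi,
          lintegral_const_mul' _ _ ENNReal.ofReal_ne_top]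
    _ = ∫⁻ z in Ioi 0, ∫⁻ y in Ici z,
        (ENNReal.ofReal (1 + y) * ∫⁻ t in Ioi (x + y - z), G z t) ∂volume.restrict (Ioi (0 : ℝ)) :=
        lintegral_setLIntegral_swap (S := {p : ℝ × ℝ | p.2 ≤ p.1})
          (f := fun y z => ENNReal.ofReal (1 + y) * ∫⁻ t in Ioi (x + y - z), G z t)
          (measurableSet_le measurable_snd measurable_fst) hF
    _ ≤ ∫⁻ z in Ioi 0, ∫⁻ y in Ici z,
        ENNReal.ofReal (1 + y) * ∫⁻ t in Ioi (x + y - z), G z t :=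
        lintegral_mono fun z => by
          rw [Measure.restrict_restrict (measurableSet_Ici : MeasurableSet (Ici z))]
          exact lintegral_mono_set inter_subset_left
    _ ≤ _ := setLIntegral_mono' measurableSet_Ioi fun z hz =>
        setLIntegral_Ici_mul_setLIntegral_Ioi_le hG.of_uncurry_left x (le_of_lt hz)

lemma setLIntegral_Ioi_sq_mul_le {ν : ℝ → ℝ≥0∞} (hν : Measurable ν) (x : ℝ) :
    ∫⁻ t in Ioi x, ENNReal.ofReal ((1 + (t - x)) ^ 2) * ν t
      ≤ weight x * ∫⁻ t, ENNReal.ofReal ((1 + |t|) ^ 2) * ν t :=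
  calc ∫⁻ t in Ioi x, ENNReal.ofReal ((1 + (t - x)) ^ 2) * ν t
      ≤ ∫⁻ t in Ioi x, weight x * (ENNReal.ofReal ((1 + |t|) ^ 2) * ν t) := by
        refine setLIntegral_mono (by fun_prop) fun t ht => ?_
        rw [← mul_assoc, mul_comm (weight x)]
        gcongr
        exact le_mul_of_one_le_right zero_le (one_le_weight t) |>.trans
          (ofReal_sq_mul_weight_le (le_of_lt ht))
    _ ≤ weight x * ∫⁻ t, ENNReal.ofReal ((1 + |t|) ^ 2) * ν t := by
        rw [lintegral_const_mul' _ _ (weight_ne_top x)]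
        gcongr
        exact Measure.restrict_le_self

lemma exists_setLIntegral_Iic_le {K : ℝ → ℝ≥0∞} (hK_fin : ∫⁻ t, K t ≠ ∞) {ε : ℝ≥0∞}
    (hε : 0 < ε) : ∃ a, ∫⁻ t in Iic a, K t ≤ ε := by
  have : IsFiniteMeasure (volume.withDensity K) := isFiniteMeasure_withDensity hK_fin
  have h := tendsto_measure_iInter_atBot (μ := volume.withDensity K) (s := Iic)
    (fun _ => measurableSet_Iic.nullMeasurableSet) (fun _ _ => Iic_subset_Iic.mpr)
    ⟨0, measure_ne_top _ _⟩
  rw [iInter_Iic_eq_empty_iff.mpr (by rw [range_id']; exact not_bddBelow_univ),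
    measure_empty] at h
  obtain ⟨a, ha⟩ := (h.eventually (gt_mem_nhds hε)).exists
  exact ⟨a, by rw [← withDensity_apply _ measurableSet_Iic]; exact ha.le⟩

lemma le_two_mul_of_le_add_inv_two_mul {a d : ℝ≥0∞} (ha : a ≠ ∞) (h : a ≤ d + 2⁻¹ * a) :
    a ≤ 2 * d := by
  have hhalf : 2⁻¹ * a + 2⁻¹ * a ≤ d + 2⁻¹ * a := by
    rwa [← add_mul, ENNReal.inv_two_add_inv_two, one_mul]
  have := (ENNReal.add_le_add_iff_right (ENNReal.mul_ne_top (by simp) ha)).mp hhalf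
  exact (ENNReal.inv_mul_le_iff two_ne_zero ENNReal.ofNat_ne_top).mp this

lemma exists_le_of_le_setLIntegral_Ioi {f K : ℝ → ℝ≥0∞} (hK : Measurable K)
    (hK_fin : ∫⁻ t, K t ≠ ∞) (hf_bdd : ∀ x₀, ∃ C ≠ ∞, ∀ x ≥ x₀, f x ≤ C)
    (hf : ∀ x, f x ≤ ∫⁻ t in Ioi x, K t * (1 + f t)) : ∃ C ≠ ∞, ∀ x, f x ≤ C := by
  obtain ⟨a, ha⟩ := exists_setLIntegral_Iic_le hK_fin (ε := 2⁻¹) (by norm_num)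
  set S : ℝ → ℝ≥0∞ := fun x₀ => ⨆ x ∈ Ici x₀, f x
  have hS_fin : ∀ x₀, S x₀ ≠ ∞ := fun x₀ => by
    obtain ⟨C, hC, hfC⟩ := hf_bdd x₀
    exact ne_top_of_le_ne_top hC (iSup₂_le hfC)
  set D := (1 + S a) * ∫⁻ t, K t
  have hS_le : ∀ x₀, S x₀ ≤ D + 2⁻¹ * S x₀ := fun x₀ => by
    refine iSup₂_le fun x hx => (hf x).trans ?_
    calc ∫⁻ t in Ioi x, K t * (1 + f t)
        ≤ ∫⁻ t in Ioi x, (K t * (1 + S a) + (Iic a).indicator K t * S x₀) := by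
          refine setLIntegral_mono ((hK.mul_const _).add
            ((hK.indicator measurableSet_Iic).mul_const _)) fun t ht => ?_
          rcases le_or_gt t a with hta | hta
          · rw [indicator_of_mem (show t ∈ Iic a from hta), mul_add, mul_add]
            gcongr
            · exact le_self_add
            · exact le_iSup₂ (f := fun x _ => f x) t (mem_Ici.mpr (hx.trans (le_of_lt ht)))
          · rw [indicator_of_notMem (show t ∉ Iic a from not_le.mpr hta), zero_mul, add_zero]
            gcongr
            exact le_iSup₂ (f := fun x _ => f x) t (mem_Ici.mpr (le_of_lt hta))
      _ ≤ ∫⁻ t, (K t * (1 + S a) + (Iic a).indicator K t * S x₀) := setLIntegral_le_lintegral _ _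
      _ = (∫⁻ t, K t) * (1 + S a) + (∫⁻ t in Iic a, K t) * S x₀ := by
          rw [lintegral_add_left (hK.mul_const _), lintegral_mul_const _ hK,
            lintegral_mul_const _ (hK.indicator measurableSet_Iic),
            lintegral_indicator measurableSet_Iic]
      _ ≤ D + 2⁻¹ * S x₀ := by rw [mul_comm]; gcongr
  refine ⟨2 * D, ENNReal.mul_ne_top ENNReal.ofNat_ne_top
    (ENNReal.mul_ne_top (ENNReal.add_ne_top.mpr ⟨ENNReal.one_ne_top, hS_fin a⟩) hK_fin),
    fun x => (le_iSup₂ (f := fun x _ => f x) x (mem_Ici.mpr le_rfl)).trans ?_⟩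
  exact le_two_mul_of_le_add_inv_two_mul (hS_fin x) (hS_le x)

noncomputable def weightedL1Norm (b : ℝ → ℝ → ℝ≥0∞) (x : ℝ) : ℝ≥0∞ :=
  ∫⁻ y in Ioi 0, ENNReal.ofReal (1 + y) * b x y

def MarchenkoIneq (ν : ℝ → ℝ≥0∞) (b : ℝ → ℝ → ℝ≥0∞) : Prop :=
  ∀ x y, 0 < y → b x y ≤ (∫⁻ t in Ioi (x + y), ν t) +
    ∫⁻ z in Ioc 0 y, ∫⁻ t in Ioi (x + y - z), ν t * b t z

section VolterraInequality

variable {ν : ℝ → ℝ≥0∞} {b : ℝ → ℝ → ℝ≥0∞}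

lemma setLIntegral_mul_weightedL1Norm {k : ℝ → ℝ≥0∞} (hk : Measurable k)
    (hb : Measurable (Function.uncurry b)) (s : Set ℝ) :
    ∫⁻ t in s, k t * weightedL1Norm b t
      = ∫⁻ z in Ioi 0, ENNReal.ofReal (1 + z) * ∫⁻ t in s, k t * b t z := by
  have hw : Measurable fun z : ℝ => ENNReal.ofReal (1 + z) := by fun_prop
  calc ∫⁻ t in s, k t * weightedL1Norm b t
      = ∫⁻ t in s, ∫⁻ z in Ioi 0, k t * (ENNReal.ofReal (1 + z) * b t z) :=
        lintegral_congr fun t => (lintegral_const_mul _ (hw.mul hb.of_uncurry_left)).symm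
    _ = ∫⁻ z in Ioi 0, ∫⁻ t in s, k t * (ENNReal.ofReal (1 + z) * b t z) :=
        lintegral_lintegral_swap ((hk.comp measurable_fst).mul
          ((hw.comp measurable_snd).mul hb)).aemeasurable
    _ = _ := lintegral_congr fun z => by
        rw [← lintegral_const_mul' _ _ ENNReal.ofReal_ne_top]
        exact lintegral_congr fun t => by ring

lemma weightedL1Norm_le (hν : Measurable ν) (hb : Measurable (Function.uncurry b))
    (hb_ineq : MarchenkoIneq ν b) (x : ℝ) :
    weightedL1Norm b x
      ≤ ∫⁻ t in Ioi x, ENNReal.ofReal ((1 + (t - x)) ^ 2) * ν t * (1 + weightedL1Norm b t) := by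
  have hk : Measurable fun t => ENNReal.ofReal ((1 + (t - x)) ^ 2) * ν t := by fun_prop
  calc weightedL1Norm b x
      ≤ ∫⁻ y in Ioi 0, ((ENNReal.ofReal (1 + y) * ∫⁻ t in Ioi (x + y), ν t) +
          ENNReal.ofReal (1 + y) * ∫⁻ z in Ioc 0 y, ∫⁻ t in Ioi (x + y - z), ν t * b t z) :=
        setLIntegral_mono' measurableSet_Ioi fun y hy => by
          rw [← mul_add]; gcongr; exact hb_ineq x y hy
    _ = (∫⁻ y in Ioi 0, ENNReal.ofReal (1 + y) * ∫⁻ t in Ioi (x + y), ν t) +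
          ∫⁻ y in Ioi 0, ENNReal.ofReal (1 + y) *
            ∫⁻ z in Ioc 0 y, ∫⁻ t in Ioi (x + y - z), ν t * b t z :=
        lintegral_add_left ((by fun_prop : Measurable fun y : ℝ => ENNReal.ofReal (1 + y)).mul
          (measurable_setLIntegral_Ioi (G := fun _ t => ν t) (by fun_prop)
            (hν.comp measurable_snd))) _
    _ ≤ (∫⁻ t in Ioi x, ENNReal.ofReal ((1 + (t - x)) ^ 2) * ν t) +
          ∫⁻ z in Ioi 0, ENNReal.ofReal (1 + z) *
            ∫⁻ t in Ioi x, ENNReal.ofReal ((1 + (t - x)) ^ 2) * (ν t * b t z) :=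
        add_le_add (setLIntegral_Ioi_mul_setLIntegral_Ioi_le hν x)
          (setLIntegral_mul_volterra_le (G := fun z t => ν t * b t z)
            ((hν.comp measurable_snd).mul (hb.comp measurable_swap)) x)
    _ = (∫⁻ t in Ioi x, ENNReal.ofReal ((1 + (t - x)) ^ 2) * ν t) +
          ∫⁻ t in Ioi x, ENNReal.ofReal ((1 + (t - x)) ^ 2) * ν t * weightedL1Norm b t := by
        simp_rw [← mul_assoc]
        rw [setLIntegral_mul_weightedL1Norm hk hb]
    _ = _ := by
        rw [← lintegral_add_left hk]
        simp_rw [mul_add, mul_one]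

lemma weightedL1Norm_div_weight_le (hν : Measurable ν) (hb : Measurable (Function.uncurry b))
    (hb_ineq : MarchenkoIneq ν b) (x : ℝ) :
    weightedL1Norm b x / weight x ≤ ∫⁻ t in Ioi x,
      ENNReal.ofReal ((1 + |t|) ^ 2) * ν t * (1 + weightedL1Norm b t / weight t) := by
  refine ENNReal.div_le_of_le_mul' ?_
  calc weightedL1Norm b x
      ≤ ∫⁻ t in Ioi x, ENNReal.ofReal ((1 + (t - x)) ^ 2) * ν t * (1 + weightedL1Norm b t) :=
        weightedL1Norm_le hν hb hb_ineq x
    _ ≤ ∫⁻ t in Ioi x, weight x *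
          (ENNReal.ofReal ((1 + |t|) ^ 2) * ν t * (1 + weightedL1Norm b t / weight t)) := by
        refine setLIntegral_mono' measurableSet_Ioi fun t ht => ?_
        have hsplit : 1 + weightedL1Norm b t ≤ weight t * (1 + weightedL1Norm b t / weight t) := by
          rw [mul_add, mul_one, ENNReal.mul_div_cancel (weight_ne_zero t) (weight_ne_top t)]
          gcongr
          exact one_le_weight t
        calc ENNReal.ofReal ((1 + (t - x)) ^ 2) * ν t * (1 + weightedL1Norm b t)
            ≤ ENNReal.ofReal ((1 + (t - x)) ^ 2) * weight t * ν t *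
                (1 + weightedL1Norm b t / weight t) := by
              rw [mul_right_comm _ (weight t), mul_assoc _ (weight t)]
              gcongr
          _ ≤ ENNReal.ofReal ((1 + |t|) ^ 2) * weight x * ν t *
                (1 + weightedL1Norm b t / weight t) := by
              gcongr ?_ * _ * _
              exact ofReal_sq_mul_weight_le (le_of_lt ht)
          _ = _ := by ring
    _ = _ := lintegral_const_mul' _ _ (weight_ne_top x)

lemma weightedL1Norm_div_weight_le_of_le (hν : Measurable ν) {x : ℝ} {C : ℝ≥0∞} (hC : C ≠ ∞)
    (hb_bdd : ∀ y, b x y ≤ C * ∫⁻ t in Ioi (x + y), ν t) :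
    weightedL1Norm b x / weight x ≤ C * ∫⁻ t, ENNReal.ofReal ((1 + |t|) ^ 2) * ν t := by
  refine ENNReal.div_le_of_le_mul' ?_
  calc weightedL1Norm b x
      ≤ ∫⁻ y in Ioi 0, C * (ENNReal.ofReal (1 + y) * ∫⁻ t in Ioi (x + y), ν t) :=
        setLIntegral_mono' measurableSet_Ioi fun y _ => by
          rw [mul_left_comm]; gcongr; exact hb_bdd y
    _ ≤ C * ∫⁻ t in Ioi x, ENNReal.ofReal ((1 + (t - x)) ^ 2) * ν t := by
        rw [lintegral_const_mul' _ _ hC]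
        gcongr C * ?_
        exact setLIntegral_Ioi_mul_setLIntegral_Ioi_le hν x
    _ ≤ C * (weight x * ∫⁻ t, ENNReal.ofReal ((1 + |t|) ^ 2) * ν t) := by
        gcongr C * ?_
        exact setLIntegral_Ioi_sq_mul_le hν x
    _ = _ := mul_left_comm _ _ _

theorem exists_weightedL1Norm_le_mul_weight (hν : Measurable ν)
    (hb : Measurable (Function.uncurry b))
    (hν_fin : ∫⁻ t, ENNReal.ofReal ((1 + |t|) ^ 2) * ν t ≠ ∞)
    (hb_ineq : MarchenkoIneq ν b)
    (hb_bdd : ∀ x₀, ∃ C ≠ ∞, ∀ x ≥ x₀, ∀ y, b x y ≤ C * ∫⁻ t in Ioi (x + y), ν t) :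
    ∃ C ≠ ∞, ∀ x, weightedL1Norm b x ≤ C * weight x := by
  have hbdd : ∀ x₀, ∃ C ≠ ∞, ∀ x ≥ x₀, weightedL1Norm b x / weight x ≤ C := fun x₀ => by
    obtain ⟨C, hC, hCb⟩ := hb_bdd x₀
    exact ⟨_, ENNReal.mul_ne_top hC hν_fin, fun x hx =>
      weightedL1Norm_div_weight_le_of_le hν hC (hCb x hx)⟩
  obtain ⟨C, hC, hle⟩ := exists_le_of_le_setLIntegral_Ioi (by fun_prop) hν_fin hbdd
    (weightedL1Norm_div_weight_le hν hb hb_ineq)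
  exact ⟨C, hC, fun x => (ENNReal.div_le_iff (weight_ne_zero x) (weight_ne_top x)).mp (hle x)⟩

end VolterraInequality

section Potential

variable {V : ℝ → ℝ} {ν : ℝ → ℝ≥0∞}

lemma integrable_abs_of_integrable_sq_mul (hV : Integrable fun x => (1 + |x|) ^ 2 * |V x|) :
    Integrable fun x => |V x| := by
  have hmeas : AEStronglyMeasurable fun x => |V x| := by
    have hinv : Continuous fun x : ℝ => ((1 + |x|) ^ 2)⁻¹ :=
      ((continuous_const.add continuous_abs).pow 2).inv₀ fun x =>
        (by positivity : (1 + |x|) ^ 2 ≠ 0)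
    refine (hinv.aestronglyMeasurable.mul hV.1).congr (ae_of_all _ fun x => ?_)
    exact inv_mul_cancel_left₀ (by positivity) _
  refine hV.mono' hmeas (ae_of_all _ fun x => ?_)
  rw [Real.norm_eq_abs, abs_abs]
  exact le_mul_of_one_le_left (abs_nonneg _) (one_le_pow₀ (by linarith [abs_nonneg x]))

lemma lintegral_sq_mul_ne_top (hV : Integrable fun x => (1 + |x|) ^ 2 * |V x|)
    (hVν : (fun t => ‖V t‖ₑ) =ᵐ[volume] ν) :
    ∫⁻ t, ENNReal.ofReal ((1 + |t|) ^ 2) * ν t ≠ ∞ := by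
  refine ne_of_lt (lt_of_eq_of_lt (lintegral_congr_ae (hVν.mono fun t ht => ?_)) hV.2)
  dsimp only at ht ⊢
  rw [← ht, enorm_mul, Real.enorm_abs, Real.enorm_of_nonneg (r := (1 + |t|) ^ 2) (by positivity)]

lemma ofReal_setIntegral_abs (hV : Integrable fun x => (1 + |x|) ^ 2 * |V x|)
    (hVν : (fun t => ‖V t‖ₑ) =ᵐ[volume] ν) (s : Set ℝ) :
    ENNReal.ofReal (∫ t in s, |V t|) = ∫⁻ t in s, ν t := by
  rw [ofReal_integral_eq_lintegral_ofReal (integrable_abs_of_integrable_sq_mul hV).integrableOn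
    (ae_of_all _ fun t => abs_nonneg _)]
  exact lintegral_congr_ae (ae_restrict_of_ae (hVν.mono fun t ht => by
    dsimp only at ht ⊢
    rw [← ht, Real.enorm_eq_ofReal_abs]))

lemma setIntegral_Ioi_sub_mul_abs_le (hV : Integrable fun x => (1 + |x|) ^ 2 * |V x|)
    {x₀ x : ℝ} (hx : x₀ ≤ x) :
    ∫ t in Ioi x, (t - x) * |V t| ≤ (1 + |x₀|) * ∫ t, (1 + |t|) ^ 2 * |V t| := by
  rw [← integral_const_mul]
  refine (integral_mono_of_nonneg ?_ (hV.const_mul _).integrableOn ?_).trans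
    (setIntegral_le_integral (hV.const_mul _) (ae_of_all _ fun t => by positivity))
  · exact (ae_restrict_iff' measurableSet_Ioi).mpr (ae_of_all _ fun t ht =>
      mul_nonneg (sub_nonneg.mpr (le_of_lt ht)) (abs_nonneg _))
  · refine (ae_restrict_iff' measurableSet_Ioi).mpr (ae_of_all _ fun t _ => ?_)
    dsimp only
    rw [← mul_assoc]
    refine mul_le_mul_of_nonneg_right ?_ (abs_nonneg _)
    have h1 : t - x ≤ |t| + |x₀| := by linarith [le_abs_self t, neg_abs_le x₀]
    have h2 : 1 + |t| ≤ (1 + |t|) ^ 2 := by nlinarith [abs_nonneg t]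
    nlinarith [mul_le_mul_of_nonneg_left h2 (by positivity : (0 : ℝ) ≤ 1 + |x₀|),
      mul_nonneg (abs_nonneg t) (abs_nonneg x₀)]

end Potential

section Kernel

variable {V : ℝ → ℝ} {B : ℝ → ℝ → ℝ}

lemma enorm_le_of_marchenko_eq {ν : ℝ → ℝ≥0∞} (hVν : (fun t => ‖V t‖ₑ) =ᵐ[volume] ν)
    {x y : ℝ} (hy : 0 ≤ y)
    (hB : B x y = (∫ t in Ioi (x + y), V t) +
      ∫ z in (0 : ℝ)..y, ∫ t in Ioi (x + y - z), V t * B t z) :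
    ‖B x y‖ₑ ≤ (∫⁻ t in Ioi (x + y), ν t) +
      ∫⁻ z in Ioc 0 y, ∫⁻ t in Ioi (x + y - z), ν t * ‖B t z‖ₑ := by
  rw [hB, intervalIntegral.integral_of_le hy]
  refine (enorm_add_le (_ : ℝ) _).trans (add_le_add ?_ ?_)
  · exact (enorm_integral_le_lintegral_enorm _).trans_eq
      (lintegral_congr_ae (ae_restrict_of_ae hVν))
  refine (enorm_integral_le_lintegral_enorm _).trans (lintegral_mono fun z => ?_)
  refine (enorm_integral_le_lintegral_enorm fun t => V t * B t z).trans_eq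
    (lintegral_congr_ae (ae_restrict_of_ae (hVν.mono fun t ht => ?_)))
  dsimp only at ht ⊢
  rw [enorm_mul, ht]

lemma enorm_le_mul_setLIntegral_Ioi {ν : ℝ → ℝ≥0∞}
    (hV : Integrable fun x => (1 + |x|) ^ 2 * |V x|) (hVν : (fun t => ‖V t‖ₑ) =ᵐ[volume] ν)
    (hB : ∀ x y : ℝ, |B x y| ≤
      Real.exp (∫ t in Ioi x, (t - x) * |V t|) * ∫ t in Ioi (x + y), |V t|) (x₀ : ℝ) :
    ∃ C ≠ ∞, ∀ x ≥ x₀, ∀ y, ‖B x y‖ₑ ≤ C * ∫⁻ t in Ioi (x + y), ν t := by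
  refine ⟨ENNReal.ofReal (Real.exp ((1 + |x₀|) * ∫ t, (1 + |t|) ^ 2 * |V t|)),
    ENNReal.ofReal_ne_top, fun x hx y => ?_⟩
  rw [Real.enorm_eq_ofReal_abs, ← ofReal_setIntegral_abs hV hVν,
    ← ENNReal.ofReal_mul (Real.exp_nonneg _)]
  refine ENNReal.ofReal_le_ofReal ((hB x y).trans ?_)
  gcongr
  exact setIntegral_Ioi_sub_mul_abs_le hV hx

lemma setIntegral_mul_abs_le {x : ℝ} {c : ℝ≥0∞} (hc : c ≠ ∞)
    (h : weightedL1Norm (fun x y => ‖B x y‖ₑ) x ≤ c) :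
    ∫ y in Ioi 0, y * |B x y| ≤ c.toReal := by
  have hle : ‖∫ y in Ioi 0, y * |B x y|‖ₑ ≤ c := by
    refine (enorm_integral_le_lintegral_enorm _).trans
      ((setLIntegral_mono' measurableSet_Ioi fun y hy => ?_).trans h)
    rw [enorm_mul, Real.enorm_abs, Real.enorm_of_nonneg (le_of_lt hy)]
    gcongr
    linarith
  rw [Real.enorm_eq_ofReal_abs, ENNReal.ofReal_le_iff_le_toReal hc] at hle
  exact (le_abs_self _).trans hle

end Kernel

end Marchenko

open Marchenko

theorem marchenko_kernel_weighted_L1_general (V : ℝ → ℝ) (B : ℝ → ℝ → ℝ)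
    (hV : Integrable (fun x => (1 + |x|) ^ 2 * |V x|))
    (hB_meas : Measurable (Function.uncurry B))
    (hB_eq : ∀ x : ℝ, ∀ y : ℝ, 0 ≤ y →
      B x y = (∫ t in Set.Ioi (x + y), V t) +
        ∫ z in (0 : ℝ)..y, ∫ t in Set.Ioi (x + y - z), V t * B t z)
    (hB_bd : ∀ x y : ℝ, |B x y| ≤
      Real.exp (∫ t in Set.Ioi x, (t - x) * |V t|) * ∫ t in Set.Ioi (x + y), |V t|) :
    ∃ c > (0 : ℝ), ∀ x : ℝ,
      (∫ y in Set.Ioi (0 : ℝ), y * |B x y|) ≤ c * (1 + max 0 (-x)) ^ 2 := by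
  -- `V` need not be measurable (only `|V|` is): Tonelli runs on a measurable version of `‖V‖ₑ`.
  obtain ⟨ν, hν, hVν⟩ : ∃ ν, Measurable ν ∧ (fun t => ‖V t‖ₑ) =ᵐ[volume] ν := by
    have h := (integrable_abs_of_integrable_sq_mul hV).aestronglyMeasurable.enorm
    simp only [Real.enorm_abs] at h
    exact ⟨h.mk _, h.measurable_mk, h.ae_eq_mk⟩
  obtain ⟨C, hC, hE⟩ :=
    exists_weightedL1Norm_le_mul_weight (b := fun x y => ‖B x y‖ₑ) hν hB_meas.enorm
    (lintegral_sq_mul_ne_top hV hVν)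
    (fun x y hy => enorm_le_of_marchenko_eq hVν hy.le (hB_eq x y hy.le))
    (enorm_le_mul_setLIntegral_Ioi hV hVν hB_bd)
  refine ⟨C.toReal + 1, by positivity, fun x => ?_⟩
  calc _ ≤ (C * weight x).toReal :=
        setIntegral_mul_abs_le (ENNReal.mul_ne_top hC (weight_ne_top x)) (hE x)
    _ = C.toReal * (1 + max 0 (-x)) ^ 2 := by
        rw [ENNReal.toReal_mul, weight, ENNReal.toReal_ofReal (by positivity)]
    _ ≤ _ := by gcongr; linarith

/-- Weighted `L¹` bound for the Marchenko kernel `B₊` with weight `y`: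
if `∫(1+|x|)²|V| < ∞` then `∫_0^∞ y|B₊(x,y)| dy ≤ c(1 + max(0,−x))²`. -/
theorem marchenko_kernel_weighted_L1 (V : ℝ → ℝ) (B : ℝ → ℝ → ℝ)
    (hV : Integrable (fun x => (1 + |x|) ^ 2 * |V x|))
    (hB_meas : Measurable (Function.uncurry B))
    (hB_supp : ∀ x : ℝ, ∀ y < (0 : ℝ), B x y = 0)
    (hB_eq : ∀ x : ℝ, ∀ y : ℝ, 0 ≤ y →
      B x y = (∫ t in Set.Ioi (x + y), V t) +
        ∫ z in (0 : ℝ)..y, ∫ t in Set.Ioi (x + y - z), V t * B t z)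
    (hB_bd : ∀ x y : ℝ, |B x y| ≤
      Real.exp (∫ t in Set.Ioi x, (t - x) * |V t|) * ∫ t in Set.Ioi (x + y), |V t|) :
    ∃ c > (0 : ℝ), ∀ x : ℝ,
      (∫ y in Set.Ioi (0 : ℝ), y * |B x y|) ≤ c * (1 + max 0 (-x)) ^ 2 :=
  marchenko_kernel_weighted_L1_general V B hV hB_meas hB_eq hB_bd
end

section
/- Suppose m_+(x,k) = 1 + ∫_0^∞ B_+(x,y) e^{2iky} dy where, for each fixed x > 0, |B_+(x,y)| ≤ C·ρ^+(x+y) with ρ^+(u) = ∫_u^∞ |V(t)| dt and V ∈ L^1(ℝ) satisfying ∫(1+|t|)|V(t)|dt < ∞. Then the inverse Fourier transform of k ↦ m_+(x,k), as a tempered distribution, equals 2π δ₀ + π B_+(x, −u/2) (supported in u ≤ 0), and in particular is bounded in total variation by 2π δ₀ + c·χ_{u<0}·ρ^+(−u/2) with c independent of x > 0. -/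
/-!
Substituting `k = -2πξ` turns both transforms into `𝓕 f ξ = ∫ e^{-2πixξ} f(x) dx`, so the
pairing becomes `2π ∫ (1 + 𝓕 b₂ ξ) 𝓕 φ ξ dξ` with `b₂ u = B₊(x, u/2)/2`. Fourier inversion gives
`∫ 𝓕 φ = φ 0` (the `2πδ₀` term), and the multiplication formula `∫ 𝓕 b₂ · 𝓕 φ = ∫ b₂ · 𝓕 (𝓕 φ)`
together with `𝓕 (𝓕 φ) = φ ∘ neg` gives the density `π B₊(x, -u/2)`. All of this needs
`B₊(x, ·) ∈ L¹`, which follows from `|B₊(x, y)| ≤ |C| ρ⁺(y)` and `∫₀^∞ ρ⁺ = ∫ t⁺ |V t| dt < ∞`.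
-/

open MeasureTheory Set Real FourierTransform Complex

/-- The paper's `(·)^∨`, with no `2π` normalisation. -/
noncomputable def expTransform (f : ℝ → ℂ) (k : ℝ) : ℂ := ∫ u, f u * cexp (I * k * u)

theorem expTransform_eq_fourier (f : ℝ → ℂ) (k : ℝ) :
    expTransform f k = 𝓕 f (-(k / (2 * π))) := by
  rw [expTransform, Real.fourier_real_eq_integral_exp_smul]
  congr 1 with u
  rw [smul_eq_mul, mul_comm]
  congr 2
  push_cast
  field_simp

theorem expTransform_two_mul (f : ℝ → ℂ) (k : ℝ) :
    expTransform f (2 * k) = expTransform (fun u => f (u / 2) / 2) k := by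
  have h := Measure.integral_comp_mul_left (fun u => f (u / 2) * cexp (I * k * u)) 2
  simp only [mul_div_cancel_left₀ _ (two_ne_zero' ℝ)] at h
  simp only [expTransform, div_mul_eq_mul_div, integral_div]
  convert h using 1
  · congr 1 with u
    push_cast
    ring_nf
  · simp [Complex.real_smul, div_eq_inv_mul]

theorem integral_comp_neg_div_two_pi (H : ℝ → ℂ) :
    ∫ k, H (-(k / (2 * π))) = 2 * π * ∫ ξ, H ξ := by
  have h := Measure.integral_comp_div H (-(2 * π))
  simp only [div_neg, abs_neg, abs_of_pos two_pi_pos] at h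
  rw [h, Complex.real_smul]
  push_cast
  ring

theorem continuous_fourier {f : ℝ → ℂ} (hf : Integrable f) : Continuous (𝓕 f) :=
  VectorFourier.fourierIntegral_continuous Real.continuous_fourierChar
    (innerSL ℝ).continuous₂ hf

theorem integrable_fourier_mul {f g : ℝ → ℂ} (hf : Integrable f) (hg : Integrable g) :
    Integrable fun ξ => 𝓕 f ξ * g ξ :=
  hg.bdd_mul (continuous_fourier hf).aestronglyMeasurable <| Filter.Eventually.of_forall
    (VectorFourier.norm_fourierIntegral_le_integral_norm _ _ _ _)

theorem fourier_fourier_schwartz (φ : SchwartzMap ℝ ℂ) (x : ℝ) :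
    𝓕 (𝓕 (⇑φ)) x = φ (-x) := by
  rw [← neg_neg x, ← Real.fourierInv_eq_fourier_neg, neg_neg,
    φ.continuous.fourierInv_fourier_eq φ.integrable (𝓕 φ).integrable]

theorem integral_fourier_schwartz (φ : SchwartzMap ℝ ℂ) : ∫ ξ, 𝓕 (⇑φ) ξ = φ 0 :=
  calc ∫ ξ, 𝓕 (⇑φ) ξ = 𝓕⁻ (𝓕 (⇑φ)) 0 := by simp [Real.fourierInv_eq]
    _ = φ 0 := by rw [φ.continuous.fourierInv_fourier_eq φ.integrable (𝓕 φ).integrable]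

theorem integral_fourier_mul_fourier_schwartz {b : ℝ → ℂ} (hb : Integrable b)
    (φ : SchwartzMap ℝ ℂ) : ∫ ξ, 𝓕 b ξ * 𝓕 (⇑φ) ξ = ∫ x, b x * φ (-x) := by
  have hflip : (innerₗ ℝ).flip = innerₗ ℝ := by
    ext
    simp
  have h := VectorFourier.integral_fourierIntegral_smul_eq_flip (L := innerₗ ℝ) (μ := volume)
    (ν := volume) Real.continuous_fourierChar continuous_inner hb (𝓕 φ).integrable
  rw [hflip] at h
  simp only [smul_eq_mul] at h
  simp only [← fourier_fourier_schwartz]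
  exact h

theorem integral_one_add_expTransform_two_mul_mul_expTransform {b : ℝ → ℂ} (hb : Integrable b)
    (φ : SchwartzMap ℝ ℂ) :
    ∫ k, (1 + expTransform b (2 * k)) * expTransform φ k =
      2 * π * φ 0 + π * ∫ u, b (-u / 2) * φ u := by
  set b₂ : ℝ → ℂ := fun u => b (u / 2) / 2
  have hb₂ : Integrable b₂ := (hb.comp_div two_ne_zero).div_const 2
  simp_rw [expTransform_two_mul, expTransform_eq_fourier]
  rw [integral_comp_neg_div_two_pi (fun ξ => (1 + 𝓕 b₂ ξ) * 𝓕 (⇑φ) ξ)]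
  simp_rw [add_mul, one_mul]
  rw [integral_add (𝓕 φ).integrable (integrable_fourier_mul hb₂ (𝓕 φ).integrable),
    integral_fourier_schwartz, integral_fourier_mul_fourier_schwartz hb₂,
    ← integral_neg_eq_self]
  simp only [b₂, neg_neg, div_mul_eq_mul_div, integral_div]
  ring

theorem MeasureTheory.Integrable.of_one_add_abs_mul {f : ℝ → ℝ}
    (h : Integrable fun t => (1 + |t|) * f t) : Integrable f := by
  have hpos : ∀ t : ℝ, 0 < 1 + |t| := fun t => by positivity
  refine (h.bdd_mul (f := fun t => (1 + |t|)⁻¹) (c := 1)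
    ((continuous_const.add continuous_abs).inv₀ fun t => (hpos t).ne').aestronglyMeasurable
    (Filter.Eventually.of_forall fun t => ?_)).congr (Filter.Eventually.of_forall fun t => ?_)
  · rw [norm_inv, Real.norm_of_nonneg (hpos t).le]
    exact inv_le_one_of_one_le₀ (by simp)
  · simp [(hpos t).ne']

theorem antitone_setIntegral_Ioi {g : ℝ → ℝ} (hg : Integrable g) (hg0 : 0 ≤ g) :
    Antitone fun y => ∫ t in Ioi y, g t := fun _ _ hab =>
  setIntegral_mono_set hg.integrableOn (Filter.Eventually.of_forall hg0)
    (Filter.Eventually.of_forall (Ioi_subset_Ioi hab))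

/-- Tonelli for the indicator of `{0 < y < t}`: `∫₀^∞ ∫_y^∞ g = ∫ t⁺ g(t) dt`. -/
theorem integrableOn_Ioi_setIntegral_Ioi {g : ℝ → ℝ}
    (h : Integrable fun t => (1 + |t|) * g t) :
    IntegrableOn (fun y => ∫ t in Ioi y, g t) (Ioi 0) := by
  set F : ℝ × ℝ → ℝ := {p | 0 < p.1 ∧ p.1 < p.2}.indicator fun p => g p.2
  have hg := h.of_one_add_abs_mul
  have hF_meas : AEStronglyMeasurable F (volume.prod volume) :=
    hg.aestronglyMeasurable.comp_snd.indicator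
      ((measurableSet_lt measurable_const measurable_fst).inter
        (measurableSet_lt measurable_fst measurable_snd))
  have hF_slice : ∀ t y, F (y, t) = (Ioo 0 t).indicator (fun _ => g t) y := by
    intro t y
    simp [F, indicator]
  have hF_slice_norm : ∀ t, ∫ y, ‖F (y, t)‖ = max t 0 * |g t| := by
    intro t
    simp only [hF_slice, norm_indicator_eq_indicator_norm, Real.norm_eq_abs]
    rw [integral_indicator_const _ measurableSet_Ioo, Real.volume_real_Ioo, sub_zero, smul_eq_mul]
  have hF : Integrable F (volume.prod volume) := by
    refine (integrable_prod_iff' hF_meas).2 ⟨Filter.Eventually.of_forall fun t => ?_, ?_⟩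
    · simp only [hF_slice]
      exact (integrable_indicator_iff measurableSet_Ioo).2
        (integrableOn_const measure_Ioo_lt_top.ne)
    · simp_rw [hF_slice_norm]
      refine h.norm.mono' ((continuous_id.max continuous_const).aestronglyMeasurable.mul
        hg.aestronglyMeasurable.norm) (Filter.Eventually.of_forall fun t => ?_)
      rw [norm_mul, Real.norm_of_nonneg (le_max_right _ _), norm_mul, norm_abs_eq_norm,
        Real.norm_of_nonneg (by positivity : (0 : ℝ) ≤ 1 + |t|)]
      gcongr
      exact max_le (by linarith [le_abs_self t]) (by positivity)
  have hρ : (fun y => ∫ t, F (y, t)) = (Ioi 0).indicator fun y => ∫ t in Ioi y, g t := by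
    ext y
    by_cases hy : 0 < y <;> simp [F, hy, indicator, ← integral_indicator measurableSet_Ioi]
  rw [← integrable_indicator_iff measurableSet_Ioi, ← hρ]
  exact hF.integral_prod_left

theorem setIntegral_Ioi_zero_eq_integral {E : Type*} [NormedAddCommGroup E] [NormedSpace ℝ E]
    {f : ℝ → E} (hf : ∀ y < 0, f y = 0) : ∫ y in Ioi 0, f y = ∫ y, f y := by
  rw [← integral_Ici_eq_integral_Ioi]
  exact setIntegral_eq_integral_of_forall_compl_eq_zero fun y hy => hf y (not_le.1 hy)

section TailBound

variable {g b : ℝ → ℝ} {x C : ℝ}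

theorem abs_le_abs_mul_setIntegral_Ioi (hg : Integrable g) (hg0 : 0 ≤ g) (hx : 0 ≤ x)
    (hb : ∀ y, |b y| ≤ C * ∫ t in Ioi (x + y), g t) (y : ℝ) :
    |b y| ≤ |C| * ∫ t in Ioi y, g t :=
  calc |b y| ≤ C * ∫ t in Ioi (x + y), g t := hb y
    _ ≤ |C| * ∫ t in Ioi (x + y), g t :=
      mul_le_mul_of_nonneg_right (le_abs_self C) (setIntegral_nonneg measurableSet_Ioi
        fun t _ => hg0 t)
    _ ≤ |C| * ∫ t in Ioi y, g t :=
      mul_le_mul_of_nonneg_left (antitone_setIntegral_Ioi hg hg0 (by linarith)) (abs_nonneg C)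

theorem integrable_of_abs_le_mul_setIntegral_Ioi (h : Integrable fun t => (1 + |t|) * g t)
    (hg0 : 0 ≤ g) (hb_meas : AEStronglyMeasurable b) (hb_supp : ∀ y < 0, b y = 0) (hx : 0 ≤ x)
    (hb : ∀ y, |b y| ≤ C * ∫ t in Ioi (x + y), g t) : Integrable b := by
  have hbound : Integrable ((Ici 0).indicator fun y => |C| * ∫ t in Ioi y, g t) :=
    (integrable_indicator_iff measurableSet_Ici).2 <|
      (integrableOn_Ici_iff_integrableOn_Ioi ENNReal.coe_ne_top).2 <|
        (integrableOn_Ioi_setIntegral_Ioi h).const_mul |C|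
  refine hbound.mono' hb_meas (Filter.Eventually.of_forall fun y => ?_)
  rcases lt_or_ge y 0 with hy | hy
  · simp [hb_supp y hy, hy]
  · simpa [hy] using
      abs_le_abs_mul_setIntegral_Ioi h.of_one_add_abs_mul hg0 hx hb y

end TailBound

/-- Distributional inverse Fourier transform of the modified Jost function:
if `m₊(x,k) = 1 + ∫_0^∞ B₊(x,y)e^{2iky}dy` with `|B₊(x,y)| ≤ C ρ⁺(x+y)`,
`ρ⁺(u) = ∫_u^∞ |V|`, then `(m₊(x,·))^∨ = 2πδ₀ + π B₊(x,−u/2)` as tempered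
distributions, and the density part is bounded by `c χ_{u<0} ρ⁺(−u/2)` uniformly in `x > 0`. -/
theorem m_plus_inverse_fourier (V : ℝ → ℝ) (B : ℝ → ℝ → ℝ) (m : ℝ → ℝ → ℂ) (C : ℝ)
    (hV : Integrable (fun t => (1 + |t|) * |V t|))
    (hB_meas : Measurable (Function.uncurry B))
    (hB_supp : ∀ x : ℝ, ∀ y < (0 : ℝ), B x y = 0)
    (hB_bd : ∀ x y : ℝ, |B x y| ≤ C * ∫ t in Set.Ioi (x + y), |V t|)
    (hm : ∀ x k : ℝ, m x k = 1 +
      ∫ y in Set.Ioi (0 : ℝ), (B x y : ℂ) * Complex.exp (2 * Complex.I * (k : ℂ) * (y : ℂ))) :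
    (∀ x : ℝ, 0 < x → ∀ φ : SchwartzMap ℝ ℂ,
      (∫ k : ℝ, m x k * ∫ u : ℝ, φ u * Complex.exp (Complex.I * (k : ℂ) * (u : ℂ))) =
        2 * Real.pi * φ 0 + Real.pi * ∫ u : ℝ, (B x (-u / 2) : ℂ) * φ u) ∧
    ∃ c > (0 : ℝ), ∀ x : ℝ, 0 < x → ∀ u : ℝ, u < 0 →
      Real.pi * |B x (-u / 2)| ≤ c * ∫ t in Set.Ioi (-u / 2), |V t| := by
  have hV_abs : Integrable fun t => |V t| := hV.of_one_add_abs_mul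
  have hV_abs0 : (0 : ℝ → ℝ) ≤ fun t => |V t| := fun t => abs_nonneg (V t)
  refine ⟨fun x hx φ => ?_, π * (|C| + 1), by positivity, fun x hx u _ => ?_⟩
  · have hBx : Integrable (B x) := integrable_of_abs_le_mul_setIntegral_Ioi hV hV_abs0
      (hB_meas.comp measurable_prodMk_left).aestronglyMeasurable (hB_supp x) hx.le (hB_bd x)
    have hmx : ∀ k, m x k = 1 + expTransform (fun y => (B x y : ℂ)) (2 * k) := by
      intro k
      rw [hm, setIntegral_Ioi_zero_eq_integral fun y hy => by simp [hB_supp x y hy]]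
      congr 2 with y
      push_cast
      ring_nf
    calc ∫ k, m x k * ∫ u, φ u * cexp (I * k * u)
        = ∫ k, (1 + expTransform (fun y => (B x y : ℂ)) (2 * k)) * expTransform φ k := by
          simp only [hmx, expTransform]
      _ = _ := integral_one_add_expTransform_two_mul_mul_expTransform hBx.ofReal φ
  · have hρ0 : 0 ≤ ∫ t in Ioi (-u / 2), |V t| := setIntegral_nonneg measurableSet_Ioi
      fun t _ => abs_nonneg (V t)
    calc π * |B x (-u / 2)| ≤ π * (|C| * ∫ t in Ioi (-u / 2), |V t|) := by
          gcongr
          exact abs_le_abs_mul_setIntegral_Ioi hV_abs hV_abs0 hx.le (hB_bd x) _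
      _ ≤ π * (|C| + 1) * ∫ t in Ioi (-u / 2), |V t| := by
          rw [mul_assoc]
          gcongr
          linarith
end
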